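/- Let T ≥ 2, let F_t : ℝⁿ → ℝⁿ for t = 1, …, T−1 be continuously differentiable maps, fix x₀ ∈ ℝⁿ, and let Ψ be the residual map Ψ(X)_t = x_t − F_t(x_{t−1}) (with x₀ the fixed initial value). Then for any X = (x₁, …, x_{T−1}), the Newton update X⁺ = X − DΨ(X)^{−1} Ψ(X) is the unique tuple (x⁺₁, …, x⁺_{T−1}) satisfying the forward recursion x⁺₁ = F₁(x₀) and x⁺_t = F_t(x_{t−1}) + DF_t(x_{t−1})(x⁺_{t−1} − x_{t−1}) for 2 ≤ t ≤ T−1; i.e., Newton's method on Ψ can be computed by T−1 sequential Jacobian–vector products without forming or inverting the full Jacobian. -/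

import Mathlib

/-!
The derivative of `Ψ` is unit lower block-bidiagonal, `(DΨ(X) v)_t = v_t - DF_t(x_{t-1}) v_{t-1}`
(with no subdiagonal term in the first row, where `x₀` is fixed). Hence the Newton equation
`DΨ(X) (X - X⁺) = Ψ(X)`, read row by row, is the forward recursion.
-/

section
variable {𝕜 ι E : Type*} [NontriviallyNormedField 𝕜] [Fintype ι]
  [NormedAddCommGroup E] [NormedSpace 𝕜 E]
  {Ψ : (ι → E) → ι → E} {D : (ι → E) →L[𝕜] ι → E} {X : ι → E}

theorem HasFDerivAt.apply_apply_eq (hD : HasFDerivAt Ψ D X) {i : ι} {L : (ι → E) →L[𝕜] E}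
    (hL : HasFDerivAt (fun X => Ψ X i) L X) (v : ι → E) : D v i = L v :=
  congrArg (· v) ((hasFDerivAt_pi'.1 hD i).unique hL)

theorem HasFDerivAt.apply_apply_eq_of_apply_eq_sub_const (hD : HasFDerivAt Ψ D X) {i : ι} {c : E}
    (hΨ : ∀ X, Ψ X i = X i - c) (v : ι → E) : D v i = v i :=
  hD.apply_apply_eq
    (((hasFDerivAt_apply (𝕜 := 𝕜) i X).sub_const c).congr_of_eventuallyEq (.of_forall hΨ)) v

theorem HasFDerivAt.apply_apply_eq_of_apply_eq_sub_comp (hD : HasFDerivAt Ψ D X) {i j : ι}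
    {f : E → E} {f' : E →L[𝕜] E} (hΨ : ∀ X, Ψ X i = X i - f (X j))
    (hf : HasFDerivAt f f' (X j)) (v : ι → E) : D v i = v i - f' (v j) :=
  hD.apply_apply_eq (((hasFDerivAt_apply (𝕜 := 𝕜) i X).sub
    (hf.comp X (hasFDerivAt_apply (𝕜 := 𝕜) j X))).congr_of_eventuallyEq (.of_forall hΨ)) v

end

theorem ContinuousLinearEquiv.eq_sub_symm_apply_iff {R M : Type*} [Ring R] [TopologicalSpace M]
    [AddCommGroup M] [Module R M] (D : M ≃L[R] M) (x y r : M) :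
    y = x - D.symm r ↔ r = D (x - y) := by
  rw [eq_sub_iff_add_eq', ← eq_sub_iff_add_eq, D.symm_apply_eq, eq_comm]

theorem sub_eq_sub_sub_map_sub_iff {G H : Type*} [AddCommGroup G] [AddCommGroup H]
    {F : Type*} [FunLike F G H] [AddMonoidHomClass F G H] (J : F) (x y c : H) (a b : G) :
    x - c = x - y - J (a - b) ↔ y = c + J (b - a) := by
  rw [map_sub, map_sub, sub_sub, sub_right_inj, eq_comm, ← eq_sub_iff_add_eq,
    ← neg_sub (J a), sub_eq_add_neg]

theorem newton_update_equals_forward_recursion_general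
    (n T : ℕ)
    (F : Fin (T - 1) → EuclideanSpace ℝ (Fin n) → EuclideanSpace ℝ (Fin n))
    (hF : ∀ i, ContDiff ℝ 1 (F i))
    (x₀ : EuclideanSpace ℝ (Fin n))
    (Ψ : (Fin (T - 1) → EuclideanSpace ℝ (Fin n)) →
      Fin (T - 1) → EuclideanSpace ℝ (Fin n))
    (hΨ : ∀ X i, Ψ X i = X i - F i
      (if (i : ℕ) = 0 then x₀
       else X ⟨(i : ℕ) - 1, Nat.lt_of_le_of_lt (Nat.sub_le _ _) i.isLt⟩))
    (X : Fin (T - 1) → EuclideanSpace ℝ (Fin n))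
    (D : (Fin (T - 1) → EuclideanSpace ℝ (Fin n)) ≃L[ℝ]
      (Fin (T - 1) → EuclideanSpace ℝ (Fin n)))
    (hD : HasFDerivAt Ψ (D : (Fin (T - 1) → EuclideanSpace ℝ (Fin n)) →L[ℝ]
      (Fin (T - 1) → EuclideanSpace ℝ (Fin n))) X) :
    ∀ Y : Fin (T - 1) → EuclideanSpace ℝ (Fin n),
      Y = X - D.symm (Ψ X) ↔
        ((∀ i : Fin (T - 1), (i : ℕ) = 0 → Y i = F i x₀) ∧
         (∀ i : Fin (T - 1), (i : ℕ) ≠ 0 →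
            Y i = F i (X ⟨(i : ℕ) - 1, Nat.lt_of_le_of_lt (Nat.sub_le _ _) i.isLt⟩) +
              fderiv ℝ (F i) (X ⟨(i : ℕ) - 1, Nat.lt_of_le_of_lt (Nat.sub_le _ _) i.isLt⟩)
                (Y ⟨(i : ℕ) - 1, Nat.lt_of_le_of_lt (Nat.sub_le _ _) i.isLt⟩ -
                 X ⟨(i : ℕ) - 1, Nat.lt_of_le_of_lt (Nat.sub_le _ _) i.isLt⟩))) := by
  intro Y
  rw [D.eq_sub_symm_apply_iff, funext_iff, ← forall_and]
  refine forall_congr' fun i => ?_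
  rw [hΨ, ← D.coe_coe]
  by_cases hi : (i : ℕ) = 0
  · have hΨi (X' : Fin (T - 1) → EuclideanSpace ℝ (Fin n)) : Ψ X' i = X' i - F i x₀ := by
      rw [hΨ, if_pos hi]
    rw [hD.apply_apply_eq_of_apply_eq_sub_const hΨi]
    simp [hi, eq_comm]
  · set j : Fin (T - 1) := ⟨(i : ℕ) - 1, Nat.lt_of_le_of_lt (Nat.sub_le _ _) i.isLt⟩
    have hΨi (X' : Fin (T - 1) → EuclideanSpace ℝ (Fin n)) : Ψ X' i = X' i - F i (X' j) := by
      rw [hΨ, if_neg hi]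
    rw [hD.apply_apply_eq_of_apply_eq_sub_comp hΨi
      ((hF i).differentiable one_ne_zero (X j)).hasFDerivAt]
    simp only [hi, if_false, false_implies, true_and, Ne, not_false_eq_true, true_implies,
      Pi.sub_apply]
    exact sub_eq_sub_sub_map_sub_iff (fderiv ℝ (F i) (X j)) _ _ _ _ _

/-- For `T ≥ 2`, continuously differentiable `F_t : ℝⁿ → ℝⁿ`
(`t = 1, …, T−1`), fixed `x₀ ∈ ℝⁿ`, and the residual map `Ψ(X)_t = x_t − F_t(x_{t−1})`
(with `x₀` the fixed initial value) whose Fréchet derivative at `X` is the invertible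
map `D`: the Newton update `X⁺ = X − DΨ(X)⁻¹ Ψ(X)` is the unique tuple satisfying the
forward recursion `x⁺₁ = F₁(x₀)` and
`x⁺_t = F_t(x_{t−1}) + DF_t(x_{t−1})(x⁺_{t−1} − x_{t−1})` for `2 ≤ t ≤ T−1`. -/
theorem newton_update_equals_forward_recursion
    (n T : ℕ) (hT : 2 ≤ T)
    (F : Fin (T - 1) → EuclideanSpace ℝ (Fin n) → EuclideanSpace ℝ (Fin n))
    (hF : ∀ i, ContDiff ℝ 1 (F i))
    (x₀ : EuclideanSpace ℝ (Fin n))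
    (Ψ : (Fin (T - 1) → EuclideanSpace ℝ (Fin n)) →
      Fin (T - 1) → EuclideanSpace ℝ (Fin n))
    (hΨ : ∀ X i, Ψ X i = X i - F i
      (if (i : ℕ) = 0 then x₀
       else X ⟨(i : ℕ) - 1, Nat.lt_of_le_of_lt (Nat.sub_le _ _) i.isLt⟩))
    (X : Fin (T - 1) → EuclideanSpace ℝ (Fin n))
    (D : (Fin (T - 1) → EuclideanSpace ℝ (Fin n)) ≃L[ℝ]
      (Fin (T - 1) → EuclideanSpace ℝ (Fin n)))
    (hD : HasFDerivAt Ψ (D : (Fin (T - 1) → EuclideanSpace ℝ (Fin n)) →L[ℝ]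
      (Fin (T - 1) → EuclideanSpace ℝ (Fin n))) X) :
    ∀ Y : Fin (T - 1) → EuclideanSpace ℝ (Fin n),
      Y = X - D.symm (Ψ X) ↔
        ((∀ i : Fin (T - 1), (i : ℕ) = 0 → Y i = F i x₀) ∧
         (∀ i : Fin (T - 1), (i : ℕ) ≠ 0 →
            Y i = F i (X ⟨(i : ℕ) - 1, Nat.lt_of_le_of_lt (Nat.sub_le _ _) i.isLt⟩) +
              fderiv ℝ (F i) (X ⟨(i : ℕ) - 1, Nat.lt_of_le_of_lt (Nat.sub_le _ _) i.isLt⟩)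
                (Y ⟨(i : ℕ) - 1, Nat.lt_of_le_of_lt (Nat.sub_le _ _) i.isLt⟩ -
                 X ⟨(i : ℕ) - 1, Nat.lt_of_le_of_lt (Nat.sub_le _ _) i.isLt⟩))) :=
  newton_update_equals_forward_recursion_general n T F hF x₀ Ψ hΨ X D hD
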